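/- arXiv:2502.07126 — 5 statements merged into one kernel-verified Lean document; each statement's English description precedes it below -/
import Mathlib

section
/- Let ε > 0 and let ≽ be a preference on ℝ^d_+ that is continuous, monotone, and ε-uncertainty averse: for all x, y ∈ ℝ^d_+, all c ≥ 0 and all λ ∈ (0,1), if x ≽ c·𝟙 and y ≽ c·𝟙 then λx + (1−λ)y ≽ (c−ε)·𝟙. Then there exist a normalized representation u : ℝ^d_+ → ℝ of ≽ and a quasi-concave function v : ℝ^d_+ → ℝ (i.e. v(λx+(1−λ)y) ≥ min{v(x), v(y)} for all x, y and λ ∈ [0,1]) such that sup_{x ∈ ℝ^d_+} |u(x) − v(x)| ≤ d·ε. -/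
/-!
The representation is the certainty equivalent `u x = sup {c ≥ 0 | x ≽ c·𝟙}`: continuity makes
the supremum attained and monotonicity makes it a normalized representation. Uncertainty aversion
says that `u` is `ε`-quasiconcave along segments, `u (t x + (1 - t) y) ≥ min (u x) (u y) - ε`.
Iterating this over the vertices of a simplex loses `ε` per added vertex, and by Carathéodory every
point of the convex hull of a superlevel set `{u ≥ r}` lies in a simplex with at most `d + 1`
vertices in that set, so `u ≥ r - d ε` on the hull. Hence the quasiconcave envelope
`v x = sup {r | x ∈ conv {u ≥ r}}` satisfies `u ≤ v ≤ u + d ε`.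
-/

open Set Finset Module

section Envelope

variable {E : Type*} [AddCommGroup E] [Module ℝ E]

def ApproxQuasiconcaveOn (ε : ℝ) (P : Set E) (u : E → ℝ) : Prop :=
  ∀ ⦃x⦄, x ∈ P → ∀ ⦃y⦄, y ∈ P → ∀ z ∈ segment ℝ x y, min (u x) (u y) - ε ≤ u z

noncomputable def quasiconcaveEnvelope (P : Set E) (u : E → ℝ) (x : E) : ℝ :=
  sSup {r | x ∈ convexHull ℝ {z ∈ P | r ≤ u z}}

variable {ε : ℝ} {P : Set E} {u : E → ℝ}

namespace ApproxQuasiconcaveOn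

theorem sub_card_mul_le_of_mem_convexHull (hu : ApproxQuasiconcaveOn ε P u) (hε : 0 ≤ ε)
    (hP : Convex ℝ P) {s : Finset E} (hsP : (s : Set E) ⊆ P) {r : ℝ} (hr : ∀ z ∈ s, r ≤ u z)
    {x : E} (hx : x ∈ convexHull ℝ (s : Set E)) : r - (#s - 1 : ℝ) * ε ≤ u x := by
  classical
  induction s using Finset.induction_on generalizing x with
  | empty => simp at hx
  | @insert a s has ih =>
    obtain rfl | hs := s.eq_empty_or_nonempty
    · obtain rfl : x = a := by simpa using hx
      simpa using hr x (mem_singleton_self x)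
    rw [coe_insert, convexHull_insert (coe_nonempty.2 hs), mem_convexJoin] at hx
    obtain ⟨b, hb, z, hz, hxz⟩ := hx
    rw [Set.mem_singleton_iff] at hb
    rw [hb] at hxz
    have hsP' : (s : Set E) ⊆ P := (coe_subset.2 (subset_insert a s)).trans hsP
    have hzP : z ∈ P := convexHull_min hsP' hP hz
    have hs1 : (1 : ℝ) ≤ #s := by exact_mod_cast hs.card_pos
    have hra := hr a (mem_insert_self a s)
    have hrz := ih hsP' (fun w hw => hr w (mem_insert_of_mem hw)) hz
    calc r - (#(insert a s) - 1 : ℝ) * ε = r - (#s - 1 : ℝ) * ε - ε := by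
          rw [card_insert_of_notMem has]; push_cast; ring
      _ ≤ min (u a) (u z) - ε := by
          gcongr
          exact le_min (by nlinarith) hrz
      _ ≤ u x := hu (hsP (mem_insert_self a s)) hzP x hxz

variable [FiniteDimensional ℝ E]

theorem sub_finrank_mul_le_of_mem_convexHull (hu : ApproxQuasiconcaveOn ε P u) (hε : 0 ≤ ε)
    (hP : Convex ℝ P) {r : ℝ} {x : E} (hx : x ∈ convexHull ℝ {z ∈ P | r ≤ u z}) :
    r - finrank ℝ E * ε ≤ u x := by
  rw [convexHull_eq_union] at hx
  simp only [mem_iUnion] at hx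
  obtain ⟨t, htP, hti, hxt⟩ := hx
  have hcard : #t ≤ finrank ℝ E + 1 := by
    simpa using hti.card_le_finrank_succ.trans (Nat.add_le_add_right (Submodule.finrank_le _) 1)
  have hcard' : (#t - 1 : ℝ) ≤ finrank ℝ E := by
    have : (#t : ℝ) ≤ finrank ℝ E + 1 := by exact_mod_cast hcard
    linarith
  calc r - finrank ℝ E * ε ≤ r - (#t - 1 : ℝ) * ε := by gcongr
    _ ≤ u x := hu.sub_card_mul_le_of_mem_convexHull hε hP (fun z hz => (htP hz).1)
        (fun z hz => (htP hz).2) hxt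

theorem bddAbove_envelopeLevels (hu : ApproxQuasiconcaveOn ε P u) (hε : 0 ≤ ε)
    (hP : Convex ℝ P) (x : E) : BddAbove {r | x ∈ convexHull ℝ {z ∈ P | r ≤ u z}} :=
  ⟨u x + finrank ℝ E * ε, fun r hr => by
    linarith [hu.sub_finrank_mul_le_of_mem_convexHull hε hP hr]⟩

theorem le_quasiconcaveEnvelope (hu : ApproxQuasiconcaveOn ε P u) (hε : 0 ≤ ε)
    (hP : Convex ℝ P) {x : E} (hx : x ∈ P) : u x ≤ quasiconcaveEnvelope P u x :=
  le_csSup (hu.bddAbove_envelopeLevels hε hP x) (subset_convexHull ℝ _ ⟨hx, le_rfl⟩)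

theorem quasiconcaveEnvelope_le (hu : ApproxQuasiconcaveOn ε P u) (hε : 0 ≤ ε)
    (hP : Convex ℝ P) {x : E} (hx : x ∈ P) :
    quasiconcaveEnvelope P u x ≤ u x + finrank ℝ E * ε :=
  csSup_le ⟨u x, subset_convexHull ℝ _ ⟨hx, le_rfl⟩⟩ fun r hr => by
    linarith [hu.sub_finrank_mul_le_of_mem_convexHull hε hP hr]

theorem quasiconcaveOn_quasiconcaveEnvelope (hu : ApproxQuasiconcaveOn ε P u) (hε : 0 ≤ ε)
    (hP : Convex ℝ P) : QuasiconcaveOn ℝ P (quasiconcaveEnvelope P u) := by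
  intro r x ⟨hxP, hrx⟩ y ⟨hyP, hry⟩ a b ha hb hab
  refine ⟨hP hxP hyP ha hb hab, le_of_forall_lt_imp_le_of_dense fun r' hr' => ?_⟩
  have mem_levels : ∀ w ∈ P, r ≤ quasiconcaveEnvelope P u w →
      w ∈ convexHull ℝ {z ∈ P | r' ≤ u z} := by
    intro w hw hrw
    unfold quasiconcaveEnvelope at hrw
    obtain ⟨s, hs, hr's⟩ := exists_lt_of_lt_csSup
      ⟨u w, subset_convexHull ℝ {z ∈ P | u w ≤ u z} ⟨hw, le_rfl⟩⟩
      (hr'.trans_le hrw)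
    refine convexHull_mono ?_ hs
    exact fun z hz => ⟨hz.1, hr's.le.trans hz.2⟩
  exact le_csSup (hu.bddAbove_envelopeLevels hε hP _)
    (convex_convexHull ℝ _ (mem_levels x hxP hrx) (mem_levels y hyP hry) ha hb hab)

end ApproxQuasiconcaveOn

end Envelope

section Preference

variable {ι : Type*}

structure IsContinuousMonotonePreference (R : (ι → ℝ) → (ι → ℝ) → Prop) : Prop where
  total : ∀ x y : ι → ℝ, 0 ≤ x → 0 ≤ y → R x y ∨ R y x
  trans : ∀ x y z : ι → ℝ, 0 ≤ x → 0 ≤ y → 0 ≤ z → R x y → R y z → R x z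
  isClosed_upper : ∀ x : ι → ℝ, 0 ≤ x → IsClosed {z : ι → ℝ | 0 ≤ z ∧ R z x}
  isClosed_lower : ∀ x : ι → ℝ, 0 ≤ x → IsClosed {z : ι → ℝ | 0 ≤ z ∧ R x z}
  mono : ∀ x y : ι → ℝ, 0 ≤ x → x ≤ y → R y x
  strictMono : ∀ x y : ι → ℝ, 0 ≤ x → (∀ i, x i < y i) → R y x ∧ ¬ R x y

noncomputable def certaintyEquiv (R : (ι → ℝ) → (ι → ℝ) → Prop) (x : ι → ℝ) : ℝ :=
  sSup {c : ℝ | 0 ≤ c ∧ R x (fun _ => c)}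

theorem isClosed_const_levels {Q : (ι → ℝ) → Prop} (hQ : IsClosed {z : ι → ℝ | 0 ≤ z ∧ Q z}) :
    IsClosed {c : ℝ | 0 ≤ c ∧ Q (fun _ => c)} := by
  convert isClosed_Ici.inter
    (hQ.preimage (continuous_pi fun _ => continuous_id : Continuous fun (c : ℝ) (_ : ι) => c))
    using 1
  ext c
  exact ⟨fun h => ⟨h.1, fun _ => h.1, h.2⟩, fun h => ⟨h.1, h.2.2⟩⟩

namespace IsContinuousMonotonePreference

variable {R : (ι → ℝ) → (ι → ℝ) → Prop} {x y : ι → ℝ}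

theorem bddAbove_certaintyLevels [Fintype ι] (hR : IsContinuousMonotonePreference R)
    (hx : 0 ≤ x) : BddAbove {c : ℝ | 0 ≤ c ∧ R x (fun _ => c)} := by
  refine ⟨∑ i, x i, fun c ⟨_, hxc⟩ => not_lt.1 fun hlt => ?_⟩
  refine (hR.strictMono x (fun _ => c) hx fun i => ?_).2 hxc
  exact (single_le_sum (fun j _ => hx j) (mem_univ i)).trans_lt hlt

theorem certaintyEquiv_mem [Fintype ι] (hR : IsContinuousMonotonePreference R) (hx : 0 ≤ x) :
    certaintyEquiv R x ∈ {c : ℝ | 0 ≤ c ∧ R x (fun _ => c)} :=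
  (isClosed_const_levels (hR.isClosed_lower x hx)).csSup_mem ⟨0, le_rfl, hR.mono 0 x le_rfl hx⟩
    (hR.bddAbove_certaintyLevels hx)

theorem const_certaintyEquiv_rel [Fintype ι] (hR : IsContinuousMonotonePreference R)
    (hx : 0 ≤ x) : R (fun _ => certaintyEquiv R x) x := by
  have hu0 := (hR.certaintyEquiv_mem hx).1
  have hIoi : Ioi (certaintyEquiv R x) ⊆ {c : ℝ | 0 ≤ c ∧ R (fun _ => c) x} := by
    intro c hc
    have hc0 : 0 ≤ c := hu0.trans (le_of_lt hc)
    refine ⟨hc0, (hR.total x (fun _ => c) hx fun _ => hc0).resolve_left fun hxc => ?_⟩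
    exact not_le.2 hc (le_csSup (hR.bddAbove_certaintyLevels hx) ⟨hc0, hxc⟩)
  exact ((isClosed_const_levels (hR.isClosed_upper x hx)).closure_subset_iff.2 hIoi
    (by simp)).2

theorem rel_iff [Fintype ι] (hR : IsContinuousMonotonePreference R) (hx : 0 ≤ x) (hy : 0 ≤ y) :
    R x y ↔ certaintyEquiv R y ≤ certaintyEquiv R x := by
  obtain ⟨hux, hxux⟩ := hR.certaintyEquiv_mem hx
  obtain ⟨huy, hyuy⟩ := hR.certaintyEquiv_mem hy
  constructor
  · intro hxy
    exact le_csSup (hR.bddAbove_certaintyLevels hx)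
      ⟨huy, hR.trans _ _ _ hx hy (fun _ => huy) hxy hyuy⟩
  · intro hle
    have huxuy : R (fun _ => certaintyEquiv R x) (fun _ => certaintyEquiv R y) :=
      hR.mono _ _ (fun _ => huy) fun _ => hle
    exact hR.trans _ _ _ hx (fun _ => hux) hy hxux
      (hR.trans _ _ _ (fun _ => hux) (fun _ => huy) hy huxuy (hR.const_certaintyEquiv_rel hy))

theorem certaintyEquiv_const [Fintype ι] (hR : IsContinuousMonotonePreference R) {c : ℝ}
    (hc : 0 ≤ c) : certaintyEquiv R (fun _ => c) = c := by
  have hc' : (0 : ι → ℝ) ≤ fun _ => c := fun _ => hc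
  obtain ⟨-, hcu⟩ := hR.certaintyEquiv_mem hc'
  refine le_antisymm (not_lt.1 fun hlt => ?_)
    (le_csSup (hR.bddAbove_certaintyLevels hc')
      ⟨hc, (hR.total _ _ hc' hc').elim id id⟩)
  exact (hR.strictMono _ _ hc' fun _ => hlt).2 hcu

theorem rel_const_iff [Fintype ι] (hR : IsContinuousMonotonePreference R) (hx : 0 ≤ x) {c : ℝ}
    (hc : 0 ≤ c) : R x (fun _ => c) ↔ c ≤ certaintyEquiv R x := by
  rw [hR.rel_iff hx fun _ => hc, hR.certaintyEquiv_const hc]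

theorem approxQuasiconcaveOn_certaintyEquiv [Fintype ι] (hR : IsContinuousMonotonePreference R)
    {ε : ℝ} (hε : 0 ≤ ε)
    (hua : ∀ x y : ι → ℝ, 0 ≤ x → 0 ≤ y → ∀ c : ℝ, 0 ≤ c →
      ∀ t : ℝ, 0 < t → t < 1 →
      R x (fun _ => c) → R y (fun _ => c) →
      R (t • x + (1 - t) • y) (fun _ => c - ε)) :
    ApproxQuasiconcaveOn ε (Ici 0) (certaintyEquiv R) := by
  rintro x (hx : 0 ≤ x) y (hy : 0 ≤ y) _ ⟨a, b, ha, hb, hab, rfl⟩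
  obtain rfl | ha0 := ha.eq_or_lt
  · obtain rfl : b = 1 := by linarith
    simp only [zero_smul, zero_add, one_smul]
    linarith [min_le_right (certaintyEquiv R x) (certaintyEquiv R y)]
  obtain rfl | hb0 := hb.eq_or_lt
  · obtain rfl : a = 1 := by linarith
    simp only [zero_smul, add_zero, one_smul]
    linarith [min_le_left (certaintyEquiv R x) (certaintyEquiv R y)]
  obtain rfl : b = 1 - a := by linarith
  set c := min (certaintyEquiv R x) (certaintyEquiv R y)
  have hc : 0 ≤ c := le_min (hR.certaintyEquiv_mem hx).1
    (hR.certaintyEquiv_mem hy).1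
  have hz : (0 : ι → ℝ) ≤ a • x + (1 - a) • y := convex_Ici (0 : ι → ℝ) hx hy ha hb hab
  have hzc := hua x y hx hy c hc a ha0 (by linarith)
    ((hR.rel_const_iff hx hc).2 (min_le_left _ _)) ((hR.rel_const_iff hy hc).2 (min_le_right _ _))
  rcases le_total (c - ε) 0 with hcε | hcε
  · exact hcε.trans (hR.certaintyEquiv_mem hz).1
  · exact (hR.rel_const_iff hz hcε).1 hzc

end IsContinuousMonotonePreference

end Preference

/-- Theorem `thm:quasiquasicon`: a continuous, monotone, ε-uncertainty
averse preference on `ℝ^d₊` admits a normalized representation `u` and a quasi-concave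
`v` with `|u - v| ≤ d·ε`. -/
theorem stmt_12 (d : ℕ) (ε : ℝ) (hε : 0 < ε)
    (R : (Fin d → ℝ) → (Fin d → ℝ) → Prop)
    (hcomp : ∀ x y : Fin d → ℝ, 0 ≤ x → 0 ≤ y → R x y ∨ R y x)
    (htrans : ∀ x y z : Fin d → ℝ, 0 ≤ x → 0 ≤ y → 0 ≤ z → R x y → R y z → R x z)
    (hcont : ∀ x : Fin d → ℝ, 0 ≤ x →
      IsClosed {z : Fin d → ℝ | 0 ≤ z ∧ R z x} ∧ IsClosed {z : Fin d → ℝ | 0 ≤ z ∧ R x z})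
    (hmono : ∀ x y : Fin d → ℝ, 0 ≤ x → x ≤ y → R y x)
    (hmono' : ∀ x y : Fin d → ℝ, 0 ≤ x → (∀ i, x i < y i) → R y x ∧ ¬ R x y)
    -- ε-uncertainty aversion
    (hua : ∀ x y : Fin d → ℝ, 0 ≤ x → 0 ≤ y → ∀ c : ℝ, 0 ≤ c →
      ∀ t : ℝ, 0 < t → t < 1 →
      R x (fun _ => c) → R y (fun _ => c) →
      R (t • x + (1 - t) • y) (fun _ => c - ε)) :
    ∃ u v : (Fin d → ℝ) → ℝ,
      (∀ x y : Fin d → ℝ, 0 ≤ x → 0 ≤ y → (R x y ↔ u y ≤ u x)) ∧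
      (∀ c : ℝ, 0 ≤ c → u (fun _ => c) = c) ∧
      -- v is quasi-concave on ℝ^d₊
      (∀ x y : Fin d → ℝ, 0 ≤ x → 0 ≤ y → ∀ t ∈ Set.Icc (0 : ℝ) 1,
        min (v x) (v y) ≤ v (t • x + (1 - t) • y)) ∧
      (∀ x : Fin d → ℝ, 0 ≤ x → |u x - v x| ≤ (d : ℝ) * ε) := by
  have hR : IsContinuousMonotonePreference R :=
    ⟨hcomp, htrans, fun x hx => (hcont x hx).1, fun x hx => (hcont x hx).2, hmono, hmono'⟩
  have hu := hR.approxQuasiconcaveOn_certaintyEquiv hε.le hua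
  have hP : Convex ℝ (Ici (0 : Fin d → ℝ)) := convex_Ici 0
  refine ⟨certaintyEquiv R, quasiconcaveEnvelope (Ici 0) (certaintyEquiv R),
    fun x y hx hy => hR.rel_iff hx hy, fun c hc => hR.certaintyEquiv_const hc, ?_, fun x hx => ?_⟩
  · intro x y hx hy t ⟨ht0, ht1⟩
    exact (quasiconcaveOn_iff_min_le.1 (hu.quasiconcaveOn_quasiconcaveEnvelope hε.le hP)).2
      hx hy ht0 (sub_nonneg.2 ht1) (add_sub_cancel t 1)
  · have lower := hu.le_quasiconcaveEnvelope hε.le hP hx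
    have upper := hu.quasiconcaveEnvelope_le hε.le hP hx
    rw [Module.finrank_fin_fun] at upper
    rw [abs_sub_comm, abs_of_nonneg (sub_nonneg.2 lower)]
    linarith
end

section
/- Let d : ℕ → ℝ with d(t) > 0 for all t, and suppose there is Θ ≥ 0 such that for all s, t ∈ ℕ the series Σ_{i=0}^{∞} 2^{−(i+1)} |log d(2^i(s+t)) − log d(2^i s) − log d(2^i t)| converges and its sum is at most Θ. Then there exists γ > 0 such that |log(d(t)/γ^t)| ≤ Θ for every t ∈ ℕ, i.e. sup_{t ∈ ℕ} |log d(t) − t·log γ| ≤ Θ. -/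
/-!
This is a Hyers–Ulam stability argument for `f = log ∘ d`. The successive differences of the
doubling quotients `f (2 ^ i t) / 2 ^ i` are the weighted diagonal defects
`2^{-(i+1)} (f (2^{i+1} t) - 2 f (2^i t))`, so the quotients converge to some `L t` with
`|L t - f t| ≤ Θ`. The defect of the quotients at `(s, t)` is `2^{-i}` times the defect of `f` at
`(2^i s, 2^i t)`, a multiple of the general term of a convergent series, so `L` is additive,
i.e. `L t = t log γ` for `γ = exp (L 1)`.
-/

open Filter Topology

lemma tendsto_add_tsum_sub_of_summable {G : Type*} [AddCommGroup G] [TopologicalSpace G]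
    [IsTopologicalAddGroup G] {g : ℕ → G} (h : Summable fun i => g (i + 1) - g i) :
    Tendsto g atTop (𝓝 (g 0 + ∑' i, (g (i + 1) - g i))) := by
  simpa only [Finset.sum_range_sub, add_sub_cancel] using h.hasSum.tendsto_sum_nat.const_add (g 0)

section DoublingQuotient

variable {M : Type*} [AddCommMonoid M] (f : M → ℝ)

noncomputable def additiveDefect (x y : M) : ℝ := f (x + y) - f x - f y

noncomputable def weightedDoublingDefect (x y : M) (i : ℕ) : ℝ :=
  (1 / 2) ^ (i + 1) * |additiveDefect f (2 ^ i • x) (2 ^ i • y)|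

noncomputable def doublingQuotient (i : ℕ) (x : M) : ℝ := f (2 ^ i • x) / 2 ^ i

lemma doublingQuotient_zero (x : M) : doublingQuotient f 0 x = f x := by
  simp [doublingQuotient]

lemma doublingQuotient_succ_sub (i : ℕ) (x : M) :
    doublingQuotient f (i + 1) x - doublingQuotient f i x =
      (1 / 2) ^ (i + 1) * additiveDefect f (2 ^ i • x) (2 ^ i • x) := by
  have hdouble : 2 ^ (i + 1) • x = 2 ^ i • x + 2 ^ i • x := by
    rw [pow_succ, mul_nsmul, two_nsmul]
  simp only [doublingQuotient, additiveDefect, hdouble, one_div, inv_pow]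
  field_simp
  ring

lemma doublingQuotient_add_sub (i : ℕ) (x y : M) :
    doublingQuotient f i (x + y) - doublingQuotient f i x - doublingQuotient f i y =
      2 * ((1 / 2) ^ (i + 1) * additiveDefect f (2 ^ i • x) (2 ^ i • y)) := by
  simp only [doublingQuotient, additiveDefect, nsmul_add, one_div, inv_pow]
  field_simp
  ring

lemma exists_tendsto_doublingQuotient (x : M) (hs : Summable (weightedDoublingDefect f x x)) :
    ∃ l, Tendsto (fun i => doublingQuotient f i x) atTop (𝓝 l) ∧
      |l - f x| ≤ ∑' i, weightedDoublingDefect f x x i := by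
  have habs : ∀ i, |doublingQuotient f (i + 1) x - doublingQuotient f i x| =
      weightedDoublingDefect f x x i := fun i => by
    rw [weightedDoublingDefect, doublingQuotient_succ_sub, abs_mul, abs_of_pos (by positivity)]
  have hs' : Summable fun i => |doublingQuotient f (i + 1) x - doublingQuotient f i x| := by
    simpa only [habs] using hs
  refine ⟨_, tendsto_add_tsum_sub_of_summable hs'.of_abs, ?_⟩
  rw [doublingQuotient_zero, add_sub_cancel_left, ← tsum_congr habs]
  exact norm_tsum_le_tsum_norm
    (f := fun i => doublingQuotient f (i + 1) x - doublingQuotient f i x) hs'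

lemma tendsto_doublingQuotient_add_sub (x y : M) (hs : Summable (weightedDoublingDefect f x y)) :
    Tendsto (fun i => doublingQuotient f i (x + y) - doublingQuotient f i x -
      doublingQuotient f i y) atTop (𝓝 0) := by
  refine (tendsto_zero_iff_abs_tendsto_zero _).mpr ?_
  have habs : ∀ i, |doublingQuotient f i (x + y) - doublingQuotient f i x -
      doublingQuotient f i y| = 2 * weightedDoublingDefect f x y i := fun i => by
    rw [weightedDoublingDefect, doublingQuotient_add_sub, abs_mul, abs_mul, abs_two,
      abs_of_pos (by positivity)]
  simpa only [Function.comp_def, habs, mul_zero] using hs.tendsto_atTop_zero.const_mul 2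

theorem exists_addMonoidHom_abs_sub_le (Θ : ℝ)
    (hsummable : ∀ x y : M, Summable (weightedDoublingDefect f x y))
    (hsum : ∀ x : M, ∑' i, weightedDoublingDefect f x x i ≤ Θ) :
    ∃ L : M →+ ℝ, ∀ x, |f x - L x| ≤ Θ := by
  choose L hL hbound using fun x => exists_tendsto_doublingQuotient f x (hsummable x x)
  have hadd : ∀ x y, L (x + y) = L x + L y := fun x y => by
    have := tendsto_nhds_unique (((hL (x + y)).sub (hL x)).sub (hL y))
      (tendsto_doublingQuotient_add_sub f x y (hsummable x y))
    linarith
  exact ⟨AddMonoidHom.mk' L hadd, fun x =>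
    (abs_sub_comm _ _).trans_le ((hbound x).trans (hsum x))⟩

end DoublingQuotient

theorem stmt_16_general (d : ℕ → ℝ) (hd : ∀ t, 0 < d t) (Θ : ℝ)
    (hsummable : ∀ s t : ℕ, Summable (fun i : ℕ =>
      (1 / 2 : ℝ) ^ (i + 1) *
        |Real.log (d (2 ^ i * (s + t))) - Real.log (d (2 ^ i * s)) - Real.log (d (2 ^ i * t))|))
    (hsum : ∀ s t : ℕ,
      (∑' i : ℕ, (1 / 2 : ℝ) ^ (i + 1) *
        |Real.log (d (2 ^ i * (s + t))) - Real.log (d (2 ^ i * s)) - Real.log (d (2 ^ i * t))|)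
        ≤ Θ) :
    ∃ γ : ℝ, 0 < γ ∧ ∀ t : ℕ, |Real.log (d t / γ ^ t)| ≤ Θ := by
  have hdefect : ∀ s t : ℕ, weightedDoublingDefect (fun t => Real.log (d t)) s t = fun i =>
      (1 / 2 : ℝ) ^ (i + 1) *
        |Real.log (d (2 ^ i * (s + t))) - Real.log (d (2 ^ i * s)) - Real.log (d (2 ^ i * t))| :=
    fun s t => funext fun i => by
      simp only [weightedDoublingDefect, additiveDefect, smul_eq_mul, mul_add]
  obtain ⟨L, hL⟩ := exists_addMonoidHom_abs_sub_le (fun t => Real.log (d t)) Θ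
    (fun s t => by simpa only [hdefect] using hsummable s t)
    (fun t => by simpa only [hdefect] using hsum t t)
  refine ⟨Real.exp (L 1), Real.exp_pos _, fun t => ?_⟩
  rw [Real.log_div (hd t).ne' (by positivity), Real.log_pow, Real.log_exp, ← nsmul_eq_mul,
    ← L.apply_nat]
  exact hL t

/-- Theorem `thm:exp`: if the discount factor `d : ℕ → ℝ₊₊` has
log-deviations from stationarity with weighted sums
`∑_{i} 2^{-(i+1)} |log d(2^i(s+t)) - log d(2^i s) - log d(2^i t)|` convergent and
bounded by `Θ` for all `s, t`, then there is `γ > 0` with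
`|log (d t / γ^t)| ≤ Θ` for every `t`. -/
theorem stmt_16 (d : ℕ → ℝ) (hd : ∀ t, 0 < d t) (Θ : ℝ) (hΘ : 0 ≤ Θ)
    (hsummable : ∀ s t : ℕ, Summable (fun i : ℕ =>
      (1 / 2 : ℝ) ^ (i + 1) *
        |Real.log (d (2 ^ i * (s + t))) - Real.log (d (2 ^ i * s)) - Real.log (d (2 ^ i * t))|))
    (hsum : ∀ s t : ℕ,
      (∑' i : ℕ, (1 / 2 : ℝ) ^ (i + 1) *
        |Real.log (d (2 ^ i * (s + t))) - Real.log (d (2 ^ i * s)) - Real.log (d (2 ^ i * t))|)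
        ≤ Θ) :
    ∃ γ : ℝ, 0 < γ ∧ ∀ t : ℕ, |Real.log (d t / γ ^ t)| ≤ Θ :=
  stmt_16_general d hd Θ hsummable hsum
end

section
/- Let ε > 0 and let d : ℕ → ℝ with d(t) > 0 for all t, and suppose that for all s, t ∈ ℕ one has 1/(1+ε) < d(s+t)/(d(s)d(t)) < 1+ε. Then there exists γ > 0 such that |log(d(t)/γ^t)| ≤ ε for every t ∈ ℕ. -/
/-- Corollary to Theorem `thm:exp`: if the multiplicative deviation of
the discount factor from stationarity is uniformly bounded,
`1/(1+ε) < d(s+t)/(d(s)d(t)) < 1+ε`, then there is `γ > 0` with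
`|log (d t / γ^t)| ≤ ε` for every `t`. -/
theorem stmt_17 (ε : ℝ) (hε : 0 < ε) (d : ℕ → ℝ) (hd : ∀ t, 0 < d t)
    (h : ∀ s t : ℕ, 1 / (1 + ε) < d (s + t) / (d s * d t) ∧ d (s + t) / (d s * d t) < 1 + ε) :
    ∃ γ : ℝ, 0 < γ ∧ ∀ t : ℕ, |Real.log (d t / γ ^ t)| ≤ ε := by
  set f : ℕ → ℝ := fun t => Real.log (d t) with hf
  set c : ℝ := Real.log (1 + ε) with hcdef
  have hε1 : (0:ℝ) < 1 + ε := by linarith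
  have hc : 0 < c := Real.log_pos (by linarith)
  have hcε : c ≤ ε := by
    have := Real.log_le_sub_one_of_pos hε1
    linarith
  -- key subadditivity-type bound
  have key : ∀ s t : ℕ, |f (s + t) - f s - f t| ≤ c := by
    intro s t
    obtain ⟨h1, h2⟩ := h s t
    have hr : 0 < d (s + t) / (d s * d t) := div_pos (hd _) (mul_pos (hd s) (hd t))
    have hlog2 : Real.log (d (s + t) / (d s * d t)) < c :=
      Real.log_lt_log hr h2
    have hlog1 : -c < Real.log (d (s + t) / (d s * d t)) := by
      have := Real.log_lt_log (one_div_pos.mpr hε1) h1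
      rwa [one_div, Real.log_inv] at this
    have heq : Real.log (d (s + t) / (d s * d t)) = f (s + t) - f s - f t := by
      rw [Real.log_div (ne_of_gt (hd _)) (ne_of_gt (mul_pos (hd s) (hd t))),
        Real.log_mul (ne_of_gt (hd s)) (ne_of_gt (hd t))]
      ring
    rw [heq] at hlog1 hlog2
    rw [abs_le]; constructor <;> linarith
  -- iterated bound
  have pow : ∀ t n : ℕ, 1 ≤ n → |f (n * t) - n * f t| ≤ ((n : ℝ) - 1) * c := by
    intro t n hn
    induction n, hn using Nat.le_induction with
    | base => simp
    | succ n hn ih =>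
      have hk := key (n * t) t
      have hnt : (n + 1) * t = n * t + t := by ring
      rw [hnt]
      rw [abs_le] at hk ih ⊢
      push_cast
      constructor <;> [linarith [ih.1, hk.1]; linarith [ih.2, hk.2]]
  -- Cauchy-type estimate
  have cdiff : ∀ s t : ℕ, 1 ≤ s → 1 ≤ t → |f s / s - f t / t| ≤ c / s + c / t := by
    intro s t hs ht
    have hs' : (0:ℝ) < s := by exact_mod_cast hs
    have ht' : (0:ℝ) < t := by exact_mod_cast ht
    have p1 := pow t s hs
    have p2 := pow s t ht
    rw [mul_comm t s] at p2
    have hX : |(t : ℝ) * f s - s * f t| ≤ ((s : ℝ) - 1) * c + ((t : ℝ) - 1) * c := by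
      have tri : |(t : ℝ) * f s - s * f t| ≤
          |(t : ℝ) * f s - f (s * t)| + |f (s * t) - s * f t| := by
        have := abs_sub_le ((t : ℝ) * f s) (f (s * t)) ((s : ℝ) * f t)
        simpa using this
      have p2' : |(t : ℝ) * f s - f (s * t)| ≤ ((t : ℝ) - 1) * c := by
        rw [abs_sub_comm]; exact p2
      linarith [p1, p2', tri]
    have heq : f s / s - f t / t = ((t : ℝ) * f s - s * f t) / (s * t) := by
      field_simp
    rw [heq, abs_div, abs_of_pos (mul_pos hs' ht'), div_le_iff₀ (mul_pos hs' ht')]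
    have e : (c / s + c / t) * ((s : ℝ) * t) = c * t + c * s := by
      field_simp
    rw [e]
    nlinarith [hX, hc, hs', ht']
  -- the sequence f t / t is Cauchy
  set a : ℕ → ℝ := fun t => f t / t with ha
  have hcauchy : CauchySeq a := by
    rw [Metric.cauchySeq_iff]
    intro η hη
    obtain ⟨n0, hn0⟩ := exists_nat_gt (2 * c / η)
    refine ⟨max n0 1, fun m hm n hn => ?_⟩
    have hm1 : 1 ≤ m := le_trans (le_max_right n0 1) hm
    have hn1 : 1 ≤ n := le_trans (le_max_right n0 1) hn
    have hmm : 2 * c / η < (m : ℝ) := by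
      have : (n0 : ℝ) ≤ m := by exact_mod_cast le_trans (le_max_left n0 1) hm
      linarith
    have hnn : 2 * c / η < (n : ℝ) := by
      have : (n0 : ℝ) ≤ n := by exact_mod_cast le_trans (le_max_left n0 1) hn
      linarith
    have hm' : (0:ℝ) < m := by exact_mod_cast hm1
    have hn' : (0:ℝ) < n := by exact_mod_cast hn1
    have hcm : c / m < η / 2 := by
      rw [div_lt_iff₀ hm']
      have := (div_lt_iff₀ hη).mp hmm
      nlinarith
    have hcn : c / n < η / 2 := by
      rw [div_lt_iff₀ hn']
      have := (div_lt_iff₀ hη).mp hnn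
      nlinarith
    have := cdiff m n hm1 hn1
    rw [Real.dist_eq]
    calc |a m - a n| ≤ c / m + c / n := this
      _ < η := by linarith
  obtain ⟨L, hL⟩ := cauchySeq_tendsto_of_complete hcauchy
  -- limit bound
  have hbound : ∀ t : ℕ, 1 ≤ t → |f t / t - L| ≤ c / t := by
    intro t ht
    have h1 : Filter.Tendsto (fun s : ℕ => |a t - a s|) Filter.atTop (nhds |a t - L|) :=
      (Filter.Tendsto.sub tendsto_const_nhds hL).abs
    have h0 : Filter.Tendsto (fun s : ℕ => c / (s : ℝ)) Filter.atTop (nhds 0) :=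
      tendsto_const_div_atTop_nhds_zero_nat c
    have h2 : Filter.Tendsto (fun s : ℕ => c / (t : ℝ) + c / (s : ℝ)) Filter.atTop
        (nhds (c / t)) := by
      simpa using (Filter.Tendsto.add tendsto_const_nhds h0)
    have hev : (fun s : ℕ => |a t - a s|) ≤ᶠ[Filter.atTop]
        (fun s : ℕ => c / (t : ℝ) + c / (s : ℝ)) := by
      filter_upwards [Filter.eventually_ge_atTop 1] with s hs
      have := cdiff t s ht hs
      simpa [ha] using this
    exact le_of_tendsto_of_tendsto h1 h2 hev
  refine ⟨Real.exp L, Real.exp_pos L, fun t => ?_⟩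
  have hlogeq : Real.log (d t / Real.exp L ^ t) = f t - t * L := by
    rw [Real.log_div (ne_of_gt (hd t)) (by positivity), Real.log_pow, Real.log_exp]
  rw [hlogeq]
  rcases Nat.eq_zero_or_pos t with rfl | ht
  · -- t = 0
    obtain ⟨h1, h2⟩ := h 0 0
    have hd0 : d (0 + 0) = d 0 := by norm_num
    rw [hd0] at h1 h2
    have hdd : d 0 / (d 0 * d 0) = 1 / d 0 := by
      field_simp
    rw [hdd] at h1 h2
    have hd0pos := hd 0
    have hu : d 0 < 1 + ε := by
      rw [div_lt_div_iff₀ hε1 hd0pos] at h1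
      linarith
    have hl : 1 / (1 + ε) < d 0 := by
      rw [div_lt_iff₀ hε1]
      nlinarith [(div_lt_iff₀ hd0pos).mp h2]
    have hlog1 : f 0 < c := Real.log_lt_log hd0pos hu
    have hlog2 : -c < f 0 := by
      have := Real.log_lt_log (one_div_pos.mpr hε1) hl
      rwa [one_div, Real.log_inv] at this
    simp only [Nat.cast_zero, zero_mul, sub_zero]
    rw [abs_le]; constructor <;> linarith
  · have ht' : (0:ℝ) < t := by exact_mod_cast ht
    have hb := hbound t ht
    have heq : f t - t * L = t * (f t / t - L) := by field_simp
    rw [heq, abs_mul, abs_of_pos ht']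
    calc (t : ℝ) * |f t / t - L| ≤ t * (c / t) := by
          exact mul_le_mul_of_nonneg_left hb (le_of_lt ht')
      _ = c := by field_simp
      _ ≤ ε := hcε
end

section
/- Let d : ℕ → ℝ be strictly decreasing with d(t) > 0 for all t and lim_{t→∞} d(t) = 0, and suppose there is Θ ≥ 0 such that |1/(d(s)·d(t)) − 1/d(s+t)| ≤ Θ for all s, t ∈ ℕ. Then there exists γ ∈ (0,1) such that d(t) = γ^t for every t ∈ ℕ. -/
/-!
Write `f = 1 / d`, so that `f s * f t - f (s + t)` is bounded by `Θ`. Expanding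
`(f s * f t - f (s + t)) * f u` along the associativity `(s + t) + u = s + (t + u)` writes it
as a sum of three defects, so `‖f s * f t - f (s + t)‖ * ‖f u‖ ≤ (‖f s‖ + 2) Θ` for every `u`.
Since `d → 0`, `f` is unbounded, which forces `f (s + t) = f s * f t` exactly (Baker's
superstability of the exponential equation). Hence `d` is multiplicative, `d 0 = 1`, and
`d t = (d 1) ^ t` with `0 < d 1 < d 0 = 1`.
-/

open Filter Set

section Superstability

variable {M 𝕜 : Type*} [AddSemigroup M] [NormedDivisionRing 𝕜] {f : M → 𝕜} {Θ : ℝ}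

theorem norm_mul_sub_map_add_mul_norm_le (hf : ∀ s t, ‖f s * f t - f (s + t)‖ ≤ Θ)
    (s t u : M) : ‖f s * f t - f (s + t)‖ * ‖f u‖ ≤ (‖f s‖ + 2) * Θ := by
  have hsplit : (f s * f t - f (s + t)) * f u =
      f s * (f t * f u - f (t + u)) + (f s * f (t + u) - f (s + (t + u)))
        - (f (s + t) * f u - f (s + t + u)) := by
    rw [add_assoc]; noncomm_ring
  calc ‖f s * f t - f (s + t)‖ * ‖f u‖
      = ‖f s * (f t * f u - f (t + u)) + (f s * f (t + u) - f (s + (t + u)))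
          - (f (s + t) * f u - f (s + t + u))‖ := by rw [← hsplit, norm_mul]
    _ ≤ ‖f s‖ * ‖f t * f u - f (t + u)‖ + ‖f s * f (t + u) - f (s + (t + u))‖
          + ‖f (s + t) * f u - f (s + t + u)‖ := by
        grw [norm_sub_le, norm_add_le, norm_mul]
    _ ≤ ‖f s‖ * Θ + Θ + Θ := by gcongr <;> apply hf
    _ = (‖f s‖ + 2) * Θ := by ring

theorem map_add_eq_mul_of_norm_mul_sub_map_add_le (hf : ∀ s t, ‖f s * f t - f (s + t)‖ ≤ Θ)
    (hunbdd : ¬BddAbove (range fun u => ‖f u‖)) (s t : M) : f (s + t) = f s * f t := by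
  by_contra hne
  have hdefect : 0 < ‖f s * f t - f (s + t)‖ := norm_pos_iff.mpr (sub_ne_zero.mpr (Ne.symm hne))
  refine hunbdd ⟨(‖f s‖ + 2) * Θ / ‖f s * f t - f (s + t)‖, ?_⟩
  rintro _ ⟨u, rfl⟩
  rw [le_div_iff₀ hdefect, mul_comm]
  exact norm_mul_sub_map_add_mul_norm_le hf s t u

end Superstability

theorem eq_pow_of_map_add_eq_mul {M : Type*} [Monoid M] {f : ℕ → M} (h0 : f 0 = 1)
    (hmul : ∀ s t, f (s + t) = f s * f t) (t : ℕ) : f t = f 1 ^ t := by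
  induction t with
  | zero => rw [pow_zero, h0]
  | succ n ih => rw [hmul, ih, pow_succ]

theorem stmt_18_general (d : ℕ → ℝ) (hpos : ∀ t, 0 < d t) (hanti : StrictAnti d)
    (hlim : Filter.Tendsto d Filter.atTop (nhds 0))
    (Θ : ℝ)
    (h : ∀ s t : ℕ, |1 / (d s * d t) - 1 / d (s + t)| ≤ Θ) :
    ∃ γ : ℝ, 0 < γ ∧ γ < 1 ∧ ∀ t : ℕ, d t = γ ^ t := by
  have hdefect : ∀ s t, ‖(d s)⁻¹ * (d t)⁻¹ - (d (s + t))⁻¹‖ ≤ Θ := fun s t => by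
    simpa [mul_inv, mul_comm] using h s t
  have hunbdd : ¬BddAbove (range fun u => ‖(d u)⁻¹‖) := by
    have hd : Tendsto d atTop (nhdsWithin 0 (Ioi 0)) :=
      tendsto_nhdsWithin_of_tendsto_nhds_of_eventually_within _ hlim (.of_forall hpos)
    exact not_bddAbove_of_tendsto_atTop (tendsto_norm_atTop_atTop.comp hd.inv_tendsto_nhdsGT_zero)
  have hmul : ∀ s t, d (s + t) = d s * d t := fun s t => by
    rw [← inv_inj, mul_inv]
    exact map_add_eq_mul_of_norm_mul_sub_map_add_le hdefect hunbdd s t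
  have hd0 : d 0 = 1 := by
    simpa [(hpos 0).ne'] using hmul 0 0
  exact ⟨d 1, hpos 1, hd0 ▸ hanti Nat.zero_lt_one, eq_pow_of_map_add_eq_mul hd0 hmul⟩

/-- Theorem `thm:exp2`: a strictly decreasing, positive discount factor
vanishing at infinity whose reciprocal `f = 1/d` satisfies the approximate
multiplicative Cauchy equation `|f(s)f(t) - f(s+t)| ≤ Θ` is exactly exponential:
`d t = γ^t` for some `γ ∈ (0,1)`. -/
theorem stmt_18 (d : ℕ → ℝ) (hpos : ∀ t, 0 < d t) (hanti : StrictAnti d)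
    (hlim : Filter.Tendsto d Filter.atTop (nhds 0))
    (Θ : ℝ) (hΘ : 0 ≤ Θ)
    (h : ∀ s t : ℕ, |1 / (d s * d t) - 1 / d (s + t)| ≤ Θ) :
    ∃ γ : ℝ, 0 < γ ∧ γ < 1 ∧ ∀ t : ℕ, d t = γ ^ t :=
  stmt_18_general d hpos hanti hlim Θ h
end

section
/- Fix x̄ ∈ ℝ, ε > 0 and λ > 0, and let X = (−∞, x̄] × [0,∞) ⊆ ℝ². Let ≽ be a complete and transitive binary relation on X satisfying: (1) ≽ is continuous (upper and lower contour sets are closed in X) and strictly monotone: if x ≥ x', t ≤ t' and (x,t) ≠ (x',t'), then (x,t) ≻ (x',t'); (2) for every (x,t) ∈ X there exists x' ≤ x̄ with (x,t) ≽ (x',0); (3) for every x ≤ x̄ there exists t̄ ≥ 0 such that (x,0) ≻ (x̄,t) for all t ≥ t̄; (4) ε-Stationarity: if (x̄,t) ∼ (x,0) then for every Δ > 0 there exists Δ' with t+Δ' ≥ 0 and |Δ − Δ'| ≤ ε such that (x̄, t+Δ') ∼ (x, Δ); (5) λ-Lipschitz: if (x,t) ∼ (y,0) then for every Δ ≥ 0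 there exists Δ' with |Δ'| ≤ λΔ and y+Δ' ≤ x̄ such that (x, t+Δ) ∼ (y+Δ', 0). Then ≽ admits a continuous utility representation u : X → ℝ (so (x,t) ≽ (x',t') iff u(x,t) ≥ u(x',t')) and there is a continuous, strictly decreasing bijection γ : (−∞, x̄] → [0,∞) with γ(x̄) = 0, sup{γ(x) : x < x̄} = +∞, u(x̄,0) = x̄, inf{u(x̄,t) : t ≥ 0} = −∞, such that |u(x,t) − γ⁻¹(γ(x) + t)| ≤ λ·ε for all (x,t) ∈ (−∞, x̄) × [0,∞), where γ⁻¹ : [0,∞) → (−∞, x̄] is the inverse of γ. -/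
/-!
Every dated reward is indifferent to exactly one immediate payment `(x', 0)`: the axis
`(-∞, x̄] × {0}` is connected and contour sets are closed, and strict monotonicity makes the
indifferent payment unique. Its present value `u (x, t) := x'` represents the preference and is
continuous because its sublevel and superlevel sets are contour sets and its range is an interval.
The discount curve `f t = u (x̄, t)` is continuous, strictly decreasing from `x̄` to `-∞`, and `γ`
is its inverse. λ-Lipschitz makes `f` λ-Lipschitz, and ε-Stationarity turns `(x, t)` into
`(x̄, γ x + Δ')` with `|t - Δ'| ≤ ε`, so `u (x, t) = f (γ x + Δ')` is within `λ ε` of `f (γ x + t)`.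
-/

open Set Filter Topology

section LevelSets

variable {α β : Type*} [TopologicalSpace α] [LinearOrder β] {X : Set α} {u : α → β}

theorem eventually_lt_of_isClosed_sublevel (hI : (u '' X).OrdConnected)
    (hle : ∀ w ∈ X, IsClosed {z | z ∈ X ∧ u z ≤ u w}) {z₀ : α} (hz₀ : z₀ ∈ X) {a : β}
    (ha : a < u z₀) : ∀ᶠ z in 𝓝[X] z₀, a < u z := by
  by_cases hbelow : ∃ w ∈ X, u w ≤ a
  · obtain ⟨w, hw, hwa⟩ := hbelow
    obtain ⟨v, hv, rfl⟩ := hI.out (mem_image_of_mem u hw) (mem_image_of_mem u hz₀) ⟨hwa, ha.le⟩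
    have hz₀C : z₀ ∉ {z | z ∈ X ∧ u z ≤ u v} := fun h => ha.not_ge h.2
    filter_upwards [nhdsWithin_le_nhds ((hle v hv).isOpen_compl.mem_nhds hz₀C),
      self_mem_nhdsWithin] with z hzC hz
    exact lt_of_not_ge fun h => hzC ⟨hz, h⟩
  · push Not at hbelow
    filter_upwards [self_mem_nhdsWithin] using hbelow

variable [TopologicalSpace β] [OrderTopology β]

theorem continuousOn_of_isClosed_sublevel_superlevel (hI : (u '' X).OrdConnected)
    (hle : ∀ w ∈ X, IsClosed {z | z ∈ X ∧ u z ≤ u w})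
    (hge : ∀ w ∈ X, IsClosed {z | z ∈ X ∧ u w ≤ u z}) : ContinuousOn u X := fun _ hz₀ =>
  tendsto_order.2 ⟨fun _ ha => eventually_lt_of_isClosed_sublevel hI hle hz₀ ha,
    fun _ hb => eventually_lt_of_isClosed_sublevel (β := βᵒᵈ) hI.dual hge hz₀ hb⟩

theorem StrictAntiOn.continuousOn_of_ordConnected_image [LinearOrder α] [OrderClosedTopology α]
    (hX : IsClosed X) (hu : StrictAntiOn u X) (hI : (u '' X).OrdConnected) :
    ContinuousOn u X := by
  refine continuousOn_of_isClosed_sublevel_superlevel hI (fun w hw => ?_) fun w hw => ?_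
  · convert hX.inter (isClosed_Ici (a := w)) using 1
    ext z
    exact and_congr_right fun hz => hu.le_iff_ge hz hw
  · convert hX.inter (isClosed_Iic (a := w)) using 1
    ext z
    exact and_congr_right fun hz => hu.le_iff_ge hw hz

end LevelSets

theorem StrictAntiOn.strictAntiOn_of_invOn {α β : Type*} [LinearOrder α] [LinearOrder β]
    {f : α → β} {g : β → α} {s : Set α} {t : Set β} (hf : StrictAntiOn f s)
    (hfg : InvOn g f s t) (hg : MapsTo g t s) : StrictAntiOn g t := fun x hx y hy hxy =>
  (hf.lt_iff_gt (hg hx) (hg hy)).1 (by rwa [hfg.2 hx, hfg.2 hy])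

section Preference

variable {α : Type*} {R : α → α → Prop} {X : Set α}

theorem exists_indiff_of_isPreconnected [TopologicalSpace α] {β : Type*} [TopologicalSpace β]
    (hcomp : ∀ z ∈ X, ∀ w ∈ X, R z w ∨ R w z)
    (hcont : ∀ w ∈ X, IsClosed {z | z ∈ X ∧ R z w} ∧ IsClosed {z | z ∈ X ∧ R w z})
    {S : Set β} (hS : IsPreconnected S) {φ : β → α} (hφ : Continuous φ) (hφS : MapsTo φ S X)
    {w : α} (hw : w ∈ X) {a b : β} (ha : a ∈ S) (hb : b ∈ S) (haw : R (φ a) w)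
    (hwb : R w (φ b)) : ∃ s ∈ S, R (φ s) w ∧ R w (φ s) := by
  have hcover : S ⊆ φ ⁻¹' {z | z ∈ X ∧ R z w} ∪ φ ⁻¹' {z | z ∈ X ∧ R w z} := fun s hs =>
    (hcomp _ (hφS hs) w hw).imp (fun h => ⟨hφS hs, h⟩) fun h => ⟨hφS hs, h⟩
  obtain ⟨s, hs, ⟨-, hsw⟩, -, hws⟩ := isPreconnected_closed_iff.1 hS _ _
    ((hcont w hw).1.preimage hφ) ((hcont w hw).2.preimage hφ) hcover
    ⟨a, ha, hφS ha, haw⟩ ⟨b, hb, hφS hb, hwb⟩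
  exact ⟨s, hs, hsw, hws⟩

variable {β : Type*} [LinearOrder β] {u : α → β}

theorem indiff_iff_eq_of_represents (hrep : ∀ z ∈ X, ∀ w ∈ X, R z w ↔ u w ≤ u z)
    {z w : α} (hz : z ∈ X) (hw : w ∈ X) : (R z w ∧ R w z) ↔ u z = u w := by
  rw [hrep z hz w hw, hrep w hw z hz, and_comm, le_antisymm_iff]

theorem continuousOn_of_represents [TopologicalSpace α] [TopologicalSpace β] [OrderTopology β]
    (hrep : ∀ z ∈ X, ∀ w ∈ X, R z w ↔ u w ≤ u z)
    (hcont : ∀ w ∈ X, IsClosed {z | z ∈ X ∧ R z w} ∧ IsClosed {z | z ∈ X ∧ R w z})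
    (hI : (u '' X).OrdConnected) : ContinuousOn u X := by
  refine continuousOn_of_isClosed_sublevel_superlevel hI (fun w hw => ?_) fun w hw => ?_
  · convert (hcont w hw).2 using 1
    ext z
    exact and_congr_right fun hz => (hrep w hw z hz).symm
  · convert (hcont w hw).1 using 1
    ext z
    exact and_congr_right fun hz => (hrep z hz w hw).symm

section Curve

variable {S : Set β} {φ : β → α}

theorem represents_of_indiff_curve (htrans : ∀ z ∈ X, ∀ w ∈ X, ∀ v ∈ X, R z w → R w v → R z v)
    (hφS : MapsTo φ S X) (hφ : ∀ a ∈ S, ∀ b ∈ S, R (φ a) (φ b) ↔ b ≤ a)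
    (hu : ∀ z ∈ X, u z ∈ S ∧ R z (φ (u z)) ∧ R (φ (u z)) z) :
    ∀ z ∈ X, ∀ w ∈ X, R z w ↔ u w ≤ u z := by
  intro z hz w hw
  obtain ⟨hzS, hzφ, hφz⟩ := hu z hz
  obtain ⟨hwS, hwφ, hφw⟩ := hu w hw
  rw [← hφ _ hzS _ hwS]
  exact ⟨fun h => htrans _ (hφS hzS) _ hz _ (hφS hwS) hφz (htrans _ hz _ hw _ (hφS hwS) h hwφ),
    fun h => htrans _ hz _ (hφS hzS) _ hw hzφ (htrans _ (hφS hzS) _ (hφS hwS) _ hw h hφw)⟩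

theorem apply_curve_of_indiff (hφS : MapsTo φ S X) (hφ : ∀ a ∈ S, ∀ b ∈ S, R (φ a) (φ b) ↔ b ≤ a)
    (hu : ∀ z ∈ X, u z ∈ S ∧ R z (φ (u z)) ∧ R (φ (u z)) z) {a : β} (ha : a ∈ S) :
    u (φ a) = a := by
  obtain ⟨huS, h₁, h₂⟩ := hu (φ a) (hφS ha)
  exact le_antisymm ((hφ _ ha _ huS).1 h₁) ((hφ _ huS _ ha).1 h₂)

end Curve

end Preference

theorem bijOn_Ici_Iic_of_strictAntiOn {f : ℝ → ℝ} (hf : ContinuousOn f (Ici 0))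
    (hanti : StrictAntiOn f (Ici 0)) (hunbdd : ∀ M, ∃ t, 0 ≤ t ∧ f t < M) :
    BijOn f (Ici 0) (Iic (f 0)) := by
  refine ⟨fun t ht => hanti.antitoneOn self_mem_Ici ht ht, hanti.injOn, fun x hx => ?_⟩
  obtain ⟨T, hT, hTx⟩ := hunbdd x
  obtain ⟨t, ⟨ht, -⟩, rfl⟩ := intermediate_value_Icc' hT (hf.mono Icc_subset_Ici_self)
    ⟨hTx.le, hx⟩
  exact ⟨t, ht, rfl⟩

theorem exists_inverse_of_strictAntiOn_Ici {f : ℝ → ℝ} {c : ℝ} (hf : ContinuousOn f (Ici 0))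
    (hanti : StrictAntiOn f (Ici 0)) (hunbdd : ∀ M, ∃ t, 0 ≤ t ∧ f t < M) (hf₀ : f 0 = c) :
    ∃ γ : ℝ → ℝ, ContinuousOn γ (Iic c) ∧ StrictAntiOn γ (Iic c) ∧ BijOn γ (Iic c) (Ici 0) ∧
      InvOn f γ (Iic c) (Ici 0) := by
  subst hf₀
  have hf_bij := bijOn_Ici_Iic_of_strictAntiOn hf hanti hunbdd
  have hinv := hf_bij.invOn_invFunOn.symm
  have hγ_bij := hf_bij.symm hinv
  have hγ_anti := hanti.strictAntiOn_of_invOn hinv.symm hγ_bij.mapsTo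
  refine ⟨_, hγ_anti.continuousOn_of_ordConnected_image isClosed_Iic ?_, hγ_anti, hγ_bij, hinv⟩
  rw [hγ_bij.image_eq]
  exact ordConnected_Ici

def datedRewards (xbar : ℝ) : Set (ℝ × ℝ) := Iic xbar ×ˢ Ici 0

theorem mk_mem_datedRewards {xbar x t : ℝ} (hx : x ≤ xbar) (ht : 0 ≤ t) :
    (x, t) ∈ datedRewards xbar :=
  mk_mem_prod hx ht

section DatedRewards

variable {xbar : ℝ} {R : ℝ × ℝ → ℝ × ℝ → Prop} {u : ℝ × ℝ → ℝ}

theorem pref_of_le (hcomp : ∀ z ∈ datedRewards xbar, ∀ w ∈ datedRewards xbar, R z w ∨ R w z)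
    (hmono : ∀ z ∈ datedRewards xbar, ∀ w ∈ datedRewards xbar,
      w.1 ≤ z.1 → z.2 ≤ w.2 → z ≠ w → R z w ∧ ¬ R w z)
    {z w : ℝ × ℝ} (hz : z ∈ datedRewards xbar) (hw : w ∈ datedRewards xbar)
    (h₁ : w.1 ≤ z.1) (h₂ : z.2 ≤ w.2) : R z w := by
  rcases eq_or_ne z w with rfl | hne
  · exact (hcomp z hz z hz).elim id id
  · exact (hmono z hz w hw h₁ h₂ hne).1

theorem pref_mk_zero_iff
    (hcomp : ∀ z ∈ datedRewards xbar, ∀ w ∈ datedRewards xbar, R z w ∨ R w z)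
    (hmono : ∀ z ∈ datedRewards xbar, ∀ w ∈ datedRewards xbar,
      w.1 ≤ z.1 → z.2 ≤ w.2 → z ≠ w → R z w ∧ ¬ R w z) :
    ∀ a ∈ Iic xbar, ∀ b ∈ Iic xbar, R (a, 0) (b, 0) ↔ b ≤ a := by
  intro a ha b hb
  have haX := mk_mem_datedRewards ha (le_refl (0 : ℝ))
  have hbX := mk_mem_datedRewards hb (le_refl (0 : ℝ))
  refine ⟨fun h => le_of_not_gt fun hab => ?_, fun h => pref_of_le hcomp hmono haX hbX h le_rfl⟩
  exact (hmono _ hbX _ haX hab.le le_rfl (by simp [hab.ne'])).2 h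

theorem exists_indiff_mk_zero
    (hcomp : ∀ z ∈ datedRewards xbar, ∀ w ∈ datedRewards xbar, R z w ∨ R w z)
    (hcont : ∀ w ∈ datedRewards xbar,
      IsClosed {z | z ∈ datedRewards xbar ∧ R z w} ∧ IsClosed {z | z ∈ datedRewards xbar ∧ R w z})
    (hmono : ∀ z ∈ datedRewards xbar, ∀ w ∈ datedRewards xbar,
      w.1 ≤ z.1 → z.2 ≤ w.2 → z ≠ w → R z w ∧ ¬ R w z)
    (hnpv : ∀ z ∈ datedRewards xbar, ∃ x' : ℝ, x' ≤ xbar ∧ R z (x', 0))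
    {z : ℝ × ℝ} (hz : z ∈ datedRewards xbar) :
    ∃ v ∈ Iic xbar, R z (v, 0) ∧ R (v, 0) z := by
  obtain ⟨x', hx', hzx'⟩ := hnpv z hz
  obtain ⟨v, hv, hvz, hzv⟩ := exists_indiff_of_isPreconnected hcomp hcont isPreconnected_Iic
    (continuous_id.prodMk continuous_const) (fun _ hc => mk_mem_datedRewards hc le_rfl) hz
    self_mem_Iic hx'
    (pref_of_le hcomp hmono (mk_mem_datedRewards le_rfl le_rfl) hz hz.1 hz.2) hzx'
  exact ⟨v, hv, hzv, hvz⟩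

theorem exists_presentValue
    (hcomp : ∀ z ∈ datedRewards xbar, ∀ w ∈ datedRewards xbar, R z w ∨ R w z)
    (htrans : ∀ z ∈ datedRewards xbar, ∀ w ∈ datedRewards xbar, ∀ v ∈ datedRewards xbar,
      R z w → R w v → R z v)
    (hcont : ∀ w ∈ datedRewards xbar,
      IsClosed {z | z ∈ datedRewards xbar ∧ R z w} ∧ IsClosed {z | z ∈ datedRewards xbar ∧ R w z})
    (hmono : ∀ z ∈ datedRewards xbar, ∀ w ∈ datedRewards xbar,
      w.1 ≤ z.1 → z.2 ≤ w.2 → z ≠ w → R z w ∧ ¬ R w z)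
    (hnpv : ∀ z ∈ datedRewards xbar, ∃ x' : ℝ, x' ≤ xbar ∧ R z (x', 0)) :
    ∃ u : ℝ × ℝ → ℝ, ContinuousOn u (datedRewards xbar) ∧
      (∀ z ∈ datedRewards xbar, ∀ w ∈ datedRewards xbar, R z w ↔ u w ≤ u z) ∧
      MapsTo u (datedRewards xbar) (Iic xbar) ∧ ∀ x ≤ xbar, u (x, 0) = x := by
  choose! u hu using fun z (hz : z ∈ datedRewards xbar) =>
    exists_indiff_mk_zero hcomp hcont hmono hnpv hz
  have hmaps : MapsTo (fun a : ℝ => ((a, 0) : ℝ × ℝ)) (Iic xbar) (datedRewards xbar) :=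
    fun _ ha => mk_mem_datedRewards ha le_rfl
  have haxis := pref_mk_zero_iff hcomp hmono
  have hrep := represents_of_indiff_curve htrans hmaps haxis hu
  have hu₀ : ∀ x ≤ xbar, u (x, 0) = x := fun x hx => apply_curve_of_indiff hmaps haxis hu hx
  have hu_le : MapsTo u (datedRewards xbar) (Iic xbar) := fun z hz => (hu z hz).1
  refine ⟨u, continuousOn_of_represents hrep hcont ?_, hrep, hu_le, hu₀⟩
  rw [hu_le.image_subset.antisymm fun x hx => ⟨(x, 0), hmaps hx, hu₀ x hx⟩]
  exact ordConnected_Iic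

theorem strictAntiOn_delay
    (hrep : ∀ z ∈ datedRewards xbar, ∀ w ∈ datedRewards xbar, R z w ↔ u w ≤ u z)
    (hmono : ∀ z ∈ datedRewards xbar, ∀ w ∈ datedRewards xbar,
      w.1 ≤ z.1 → z.2 ≤ w.2 → z ≠ w → R z w ∧ ¬ R w z) :
    StrictAntiOn (fun t => u (xbar, t)) (Ici 0) := fun s hs t ht hst => by
  have hsX := mk_mem_datedRewards (le_refl xbar) hs
  have htX := mk_mem_datedRewards (le_refl xbar) ht
  have h := (hmono _ hsX _ htX le_rfl hst.le (by simp [hst.ne])).2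
  rw [hrep _ htX _ hsX] at h
  exact lt_of_not_ge h

theorem exists_delay_lt
    (hrep : ∀ z ∈ datedRewards xbar, ∀ w ∈ datedRewards xbar, R z w ↔ u w ≤ u z)
    (hu₀ : ∀ x ≤ xbar, u (x, 0) = x)
    (hdeprec : ∀ x : ℝ, x ≤ xbar → ∃ tbar : ℝ, 0 ≤ tbar ∧ ∀ t : ℝ, tbar ≤ t →
      R (x, 0) (xbar, t) ∧ ¬ R (xbar, t) (x, 0)) (M : ℝ) :
    ∃ t, 0 ≤ t ∧ u (xbar, t) < M := by
  have hx : min M xbar - 1 ≤ xbar := by linarith [min_le_right M xbar]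
  obtain ⟨T, hT, hdisc⟩ := hdeprec _ hx
  refine ⟨T, hT, ?_⟩
  have h := (hdisc T le_rfl).2
  rw [hrep _ (mk_mem_datedRewards le_rfl hT) _ (mk_mem_datedRewards hx le_rfl), hu₀ _ hx] at h
  linarith [min_le_left M xbar]

theorem abs_delay_sub_le {lam : ℝ}
    (hrep : ∀ z ∈ datedRewards xbar, ∀ w ∈ datedRewards xbar, R z w ↔ u w ≤ u z)
    (hu₀ : ∀ x ≤ xbar, u (x, 0) = x) (hu_le : MapsTo u (datedRewards xbar) (Iic xbar))
    (hlip : ∀ x : ℝ, x ≤ xbar → ∀ t : ℝ, 0 ≤ t → ∀ y : ℝ, y ≤ xbar →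
      (R (x, t) (y, 0) ∧ R (y, 0) (x, t)) →
      ∀ Δ : ℝ, 0 ≤ Δ → ∃ Δ' : ℝ, |Δ'| ≤ lam * Δ ∧ y + Δ' ≤ xbar ∧
        (R (x, t + Δ) (y + Δ', 0) ∧ R (y + Δ', 0) (x, t + Δ)))
    {a b : ℝ} (ha : 0 ≤ a) (hb : 0 ≤ b) : |u (xbar, a) - u (xbar, b)| ≤ lam * |a - b| := by
  wlog hba : b ≤ a generalizing a b
  · rw [abs_sub_comm, abs_sub_comm a]
    exact this hb ha (le_of_not_ge hba)
  have hbX : (xbar, b) ∈ datedRewards xbar := mk_mem_datedRewards le_rfl hb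
  have hy : u (xbar, b) ≤ xbar := hu_le hbX
  have hind : R (xbar, b) (u (xbar, b), 0) ∧ R (u (xbar, b), 0) (xbar, b) :=
    (indiff_iff_eq_of_represents hrep hbX (mk_mem_datedRewards hy le_rfl)).2 (hu₀ _ hy).symm
  obtain ⟨Δ', hΔ', hyΔ', hind'⟩ := hlip xbar le_rfl b hb _ hy hind (a - b) (by linarith)
  rw [add_sub_cancel] at hind'
  have hΔ : u (xbar, a) = u (xbar, b) + Δ' := by
    rw [(indiff_iff_eq_of_represents hrep (mk_mem_datedRewards le_rfl ha)
      (mk_mem_datedRewards hyΔ' le_rfl)).1 hind', hu₀ _ hyΔ']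
  rwa [hΔ, add_sub_cancel_left, abs_of_nonneg (sub_nonneg.2 hba)]

theorem abs_sub_delay_le {ε lam : ℝ} (hε : 0 < ε) (hlam : 0 < lam)
    (hrep : ∀ z ∈ datedRewards xbar, ∀ w ∈ datedRewards xbar, R z w ↔ u w ≤ u z)
    (hstat : ∀ x : ℝ, x ≤ xbar → ∀ t : ℝ, 0 ≤ t →
      (R (xbar, t) (x, 0) ∧ R (x, 0) (xbar, t)) →
      ∀ Δ : ℝ, 0 < Δ → ∃ Δ' : ℝ, 0 ≤ t + Δ' ∧ |Δ - Δ'| ≤ ε ∧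
        (R (xbar, t + Δ') (x, Δ) ∧ R (x, Δ) (xbar, t + Δ')))
    (hdelay : ∀ a ≥ 0, ∀ b ≥ 0, |u (xbar, a) - u (xbar, b)| ≤ lam * |a - b|)
    {x s t : ℝ} (hx : x ≤ xbar) (hs : 0 ≤ s) (hsx : u (xbar, s) = u (x, 0)) (ht : 0 ≤ t) :
    |u (x, t) - u (xbar, s + t)| ≤ lam * ε := by
  rcases ht.eq_or_lt with rfl | ht
  · rw [add_zero, hsx, sub_self, abs_zero]
    positivity
  obtain ⟨Δ', hΔ', hΔε, hind⟩ := hstat x hx s hs ((indiff_iff_eq_of_represents hrep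
    (mk_mem_datedRewards le_rfl hs) (mk_mem_datedRewards hx le_rfl)).2 hsx) t ht
  have hxt : u (xbar, s + Δ') = u (x, t) := (indiff_iff_eq_of_represents hrep
    (mk_mem_datedRewards le_rfl hΔ') (mk_mem_datedRewards hx ht.le)).1 hind
  calc |u (x, t) - u (xbar, s + t)| = |u (xbar, s + Δ') - u (xbar, s + t)| := by rw [hxt]
    _ ≤ lam * |s + Δ' - (s + t)| := hdelay _ hΔ' _ (by linarith)
    _ ≤ lam * ε := by
      rw [add_sub_add_left_eq_sub, abs_sub_comm]
      exact mul_le_mul_of_nonneg_left hΔε hlam.le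

end DatedRewards

/-- Theorem `thm:exp3`: a continuous, strictly monotone preference on
`X = (-∞, x̄] × [0,∞)` satisfying the present-value axiom, the depreciation axiom,
ε-Stationarity and λ-Lipschitz admits a continuous utility representation `u` and a
continuous strictly decreasing bijection `γ : (-∞, x̄] → [0,∞)` with `γ x̄ = 0`,
`sup γ = +∞` on `(-∞, x̄)`, `u (x̄, 0) = x̄`, `inf_t u (x̄, t) = -∞`, and
`|u (x, t) - γ⁻¹(γ x + t)| ≤ λ·ε` on `(-∞, x̄) × [0,∞)`. -/
theorem stmt_19 (xbar ε lam : ℝ) (hε : 0 < ε) (hlam : 0 < lam)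
    (R : ℝ × ℝ → ℝ × ℝ → Prop)
    (X : Set (ℝ × ℝ)) (hX : X = Set.Iic xbar ×ˢ Set.Ici (0 : ℝ))
    (hcomp : ∀ z ∈ X, ∀ w ∈ X, R z w ∨ R w z)
    (htrans : ∀ z ∈ X, ∀ w ∈ X, ∀ v ∈ X, R z w → R w v → R z v)
    (hcont : ∀ w ∈ X, IsClosed {z | z ∈ X ∧ R z w} ∧ IsClosed {z | z ∈ X ∧ R w z})
    (hmono : ∀ z ∈ X, ∀ w ∈ X, w.1 ≤ z.1 → z.2 ≤ w.2 → z ≠ w → R z w ∧ ¬ R w z)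
    -- (2) every dated reward has a present value
    (hnpv : ∀ z ∈ X, ∃ x' : ℝ, x' ≤ xbar ∧ R z (x', 0))
    -- (3) delays can discount the maximal payment below any present payment
    (hdeprec : ∀ x : ℝ, x ≤ xbar → ∃ tbar : ℝ, 0 ≤ tbar ∧ ∀ t : ℝ, tbar ≤ t →
      R (x, 0) (xbar, t) ∧ ¬ R (xbar, t) (x, 0))
    -- (4) ε-Stationarity
    (hstat : ∀ x : ℝ, x ≤ xbar → ∀ t : ℝ, 0 ≤ t →
      (R (xbar, t) (x, 0) ∧ R (x, 0) (xbar, t)) →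
      ∀ Δ : ℝ, 0 < Δ → ∃ Δ' : ℝ, 0 ≤ t + Δ' ∧ |Δ - Δ'| ≤ ε ∧
        (R (xbar, t + Δ') (x, Δ) ∧ R (x, Δ) (xbar, t + Δ')))
    -- (5) λ-Lipschitz
    (hlip : ∀ x : ℝ, x ≤ xbar → ∀ t : ℝ, 0 ≤ t → ∀ y : ℝ, y ≤ xbar →
      (R (x, t) (y, 0) ∧ R (y, 0) (x, t)) →
      ∀ Δ : ℝ, 0 ≤ Δ → ∃ Δ' : ℝ, |Δ'| ≤ lam * Δ ∧ y + Δ' ≤ xbar ∧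
        (R (x, t + Δ) (y + Δ', 0) ∧ R (y + Δ', 0) (x, t + Δ))) :
    ∃ (u : ℝ × ℝ → ℝ) (γ γinv : ℝ → ℝ),
      ContinuousOn u X ∧
      (∀ z ∈ X, ∀ w ∈ X, (R z w ↔ u w ≤ u z)) ∧
      ContinuousOn γ (Set.Iic xbar) ∧
      StrictAntiOn γ (Set.Iic xbar) ∧
      Set.BijOn γ (Set.Iic xbar) (Set.Ici 0) ∧
      Set.InvOn γinv γ (Set.Iic xbar) (Set.Ici 0) ∧
      γ xbar = 0 ∧
      (∀ M : ℝ, ∃ x : ℝ, x < xbar ∧ M < γ x) ∧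
      u (xbar, 0) = xbar ∧
      (∀ M : ℝ, ∃ t : ℝ, 0 ≤ t ∧ u (xbar, t) < M) ∧
      (∀ x : ℝ, x < xbar → ∀ t : ℝ, 0 ≤ t → |u (x, t) - γinv (γ x + t)| ≤ lam * ε) := by
  subst hX
  obtain ⟨u, hu_cont, hrep, hu_le, hu₀⟩ := exists_presentValue hcomp htrans hcont hmono hnpv
  have hf_cont : ContinuousOn (fun t => u (xbar, t)) (Ici 0) :=
    hu_cont.comp (continuous_const.prodMk continuous_id).continuousOn
      fun _ ht => mk_mem_datedRewards le_rfl ht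
  have hf_anti := strictAntiOn_delay hrep hmono
  obtain ⟨γ, hγ_cont, hγ_anti, hγ_bij, hinv⟩ := exists_inverse_of_strictAntiOn_Ici hf_cont
    hf_anti (exists_delay_lt hrep hu₀ hdeprec) (hu₀ xbar le_rfl)
  refine ⟨u, γ, fun t => u (xbar, t), hu_cont, hrep, hγ_cont, hγ_anti, hγ_bij, hinv, ?_,
    fun M => ?_, hu₀ xbar le_rfl, exists_delay_lt hrep hu₀ hdeprec, fun x hx t ht => ?_⟩
  · simpa [hu₀ xbar le_rfl] using hinv.2 (self_mem_Ici : (0 : ℝ) ∈ Ici 0)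
  · have ht : 0 < max M 0 + 1 := by positivity
    refine ⟨u (xbar, max M 0 + 1), ?_, ?_⟩
    · simpa [hu₀ xbar le_rfl] using hf_anti self_mem_Ici ht.le ht
    · rw [hinv.2 ht.le]
      linarith [le_max_left M 0]
  · exact abs_sub_delay_le hε hlam hrep hstat
      (fun a ha b hb => abs_delay_sub_le hrep hu₀ hu_le hlip ha hb) hx.le
      (hγ_bij.mapsTo hx.le) ((hinv.1 hx.le).trans (hu₀ x hx.le).symm) ht
end
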